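/- Under hypotheses H(A), H(J), H(γ,f) and (H_s), for every fixed w ∈ V the functional v ↦ ℒ(w,v) = F_A(v) − ⟨f,v⟩ + J(γw, γv) is coercive, i.e. ℒ(w,v) → ∞ as ‖v‖_V → ∞. -/

import Mathlib

/-!
Integrating the strong monotonicity of `A = F_A'` along the segment `[0, v]` gives
`F_A v ≥ F_A 0 + A 0 v + m_A / 2 * ‖v‖ ^ 2`.
For `j = J (γ w)`, relaxed monotonicity with `v₁ = 0`, together with positive homogeneity
of the Clarke derivative and `j⁰(0; x) ≥ -K ‖x‖` (`K` a Lipschitz constant of `j` near `0`),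
gives `j⁰((1 - t) u; -u) ≤ m_α (1 - t) ‖u‖ ^ 2 + K ‖u‖`. Since Clarke derivatives dominate
one-sided Dini derivatives, a comparison argument along `t ↦ j ((1 - t) u)` yields
`j u ≥ j 0 - K ‖u‖ - m_α / 2 * ‖u‖ ^ 2`. Hence `ℒ(w, ·)` is bounded below by a quadratic in
`‖v‖` with leading coefficient `(m_A - m_α ‖γ‖ ^ 2) / 2 > 0`.
-/

open Filter Topology

/-- Clarke generalized directional derivative of `j` at `x` in direction `v`. -/
noncomputable def clarkeDeriv {Y : Type*} [NormedAddCommGroup Y] [NormedSpace ℝ Y]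
    (j : Y → ℝ) (x v : Y) : ℝ :=
  Filter.limsup (fun p : Y × ℝ => (j (p.1 + p.2 • v) - j p.1) / p.2)
    ((nhds x) ×ˢ (nhdsWithin (0 : ℝ) (Set.Ioi (0 : ℝ))))

/-- Clarke generalized subdifferential of `j` at `x`. -/
noncomputable def clarkeSubdiff {Y : Type*} [NormedAddCommGroup Y] [NormedSpace ℝ Y]
    (j : Y → ℝ) (x : Y) : Set (Y →L[ℝ] ℝ) :=
  {ξ : Y →L[ℝ] ℝ | ∀ v : Y, ξ v ≤ clarkeDeriv j x v}

open Set

lemma map_mul_left_nhdsGT_zero {c : ℝ} (hc : 0 < c) :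
    map (c * ·) (𝓝[>] (0 : ℝ)) = 𝓝[>] 0 := by
  simpa [image_const_mul_Ioi_zero hc] using
    (Homeomorph.mulLeft₀ c hc.ne').isEmbedding.map_nhdsWithin_eq (Ioi 0) 0

section Clarke

variable {Y : Type*} [NormedAddCommGroup Y] [NormedSpace ℝ Y] {j : Y → ℝ} {x : Y}
  {K : NNReal} {s : Set Y}

def clarkeFilter (x : Y) : Filter (Y × ℝ) := 𝓝 x ×ˢ 𝓝[>] 0

noncomputable def clarkeQuotient (j : Y → ℝ) (v : Y) (p : Y × ℝ) : ℝ :=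
  (j (p.1 + p.2 • v) - j p.1) / p.2

lemma clarkeDeriv_eq_limsup (j : Y → ℝ) (x v : Y) :
    clarkeDeriv j x v = limsup (clarkeQuotient j v) (clarkeFilter x) := rfl

instance (x : Y) : (clarkeFilter x).NeBot := by
  unfold clarkeFilter
  infer_instance

lemma tendsto_add_smul_clarkeFilter (x v : Y) :
    Tendsto (fun p : Y × ℝ => p.1 + p.2 • v) (clarkeFilter x) (𝓝 x) := by
  have hcont : Continuous fun p : Y × ℝ => p.1 + p.2 • v := by fun_prop
  simpa [clarkeFilter] using (hcont.tendsto (x, 0)).mono_left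
    (Filter.prod_mono le_rfl nhdsWithin_le_nhds |>.trans_eq (nhds_prod_eq).symm)

lemma eventually_abs_clarkeQuotient_le (hj : LipschitzOnWith K j s) (hs : s ∈ 𝓝 x) (v : Y) :
    ∀ᶠ p in clarkeFilter x, |clarkeQuotient j v p| ≤ K * ‖v‖ := by
  have h₁ : ∀ᶠ p in clarkeFilter x, p.1 ∈ s := tendsto_fst.eventually hs
  have h₂ : ∀ᶠ p in clarkeFilter x, p.1 + p.2 • v ∈ s :=
    (tendsto_add_smul_clarkeFilter x v).eventually hs
  have h₃ : ∀ᶠ p in clarkeFilter x, 0 < p.2 := tendsto_snd.eventually self_mem_nhdsWithin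
  filter_upwards [h₁, h₂, h₃] with p hy hyv hl
  have hlip := hj.dist_le_mul _ hyv _ hy
  rw [Real.dist_eq, dist_eq_norm, add_sub_cancel_left, norm_smul, Real.norm_of_nonneg hl.le]
    at hlip
  rw [clarkeQuotient, abs_div, abs_of_pos hl, div_le_iff₀ hl]
  linarith

lemma isBoundedUnder_le_clarkeQuotient (hj : LipschitzOnWith K j s) (hs : s ∈ 𝓝 x) (v : Y) :
    IsBoundedUnder (· ≤ ·) (clarkeFilter x) (clarkeQuotient j v) :=
  isBoundedUnder_of_eventually_le
    ((eventually_abs_clarkeQuotient_le hj hs v).mono fun _ h => (abs_le.mp h).2)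

lemma isCoboundedUnder_le_clarkeQuotient (hj : LipschitzOnWith K j s) (hs : s ∈ 𝓝 x) (v : Y) :
    IsCoboundedUnder (· ≤ ·) (clarkeFilter x) (clarkeQuotient j v) :=
  isCoboundedUnder_le_of_eventually_le _
    ((eventually_abs_clarkeQuotient_le hj hs v).mono fun _ h => (abs_le.mp h).1)

lemma neg_mul_norm_le_clarkeDeriv (hj : LipschitzOnWith K j s) (hs : s ∈ 𝓝 x) (v : Y) :
    -(K * ‖v‖) ≤ clarkeDeriv j x v :=
  le_limsup_of_frequently_le
    ((eventually_abs_clarkeQuotient_le hj hs v).mono fun _ h => (abs_le.mp h).1).frequently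
    (isBoundedUnder_le_clarkeQuotient hj hs v)

lemma clarkeDeriv_smul (hj : LipschitzOnWith K j s) (hs : s ∈ 𝓝 x) (v : Y) {c : ℝ}
    (hc : 0 < c) :
    clarkeDeriv j x (c • v) = c * clarkeDeriv j x v := by
  have hquot : clarkeQuotient j (c • v)
      = (c * ·) ∘ clarkeQuotient j v ∘ Prod.map id (c * ·) := by
    funext p
    rcases eq_or_ne p.2 0 with h | h
    · simp [clarkeQuotient, h]
    · simp only [clarkeQuotient, Function.comp_apply, Prod.map_fst, Prod.map_snd, id_eq,
        smul_smul, mul_comm p.2 c]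
      field_simp
  have hmap : map (Prod.map id (c * ·)) (clarkeFilter x) = clarkeFilter x := by
    rw [clarkeFilter, ← prod_map_map_eq', map_id, map_mul_left_nhdsGT_zero hc]
  rw [clarkeDeriv_eq_limsup, hquot, ← Function.comp_assoc, limsup_comp, hmap,
    ← (monotone_mul_left_of_nonneg hc.le).map_limsup_of_continuousAt _
      (continuous_const_mul c).continuousAt (isBoundedUnder_le_clarkeQuotient hj hs v)
      (isCoboundedUnder_le_clarkeQuotient hj hs v),
    clarkeDeriv_eq_limsup]

lemma eventually_slope_lt_of_clarkeDeriv_lt (hj : LipschitzOnWith K j s) (hs : s ∈ 𝓝 x)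
    {v : Y} {ρ : ℝ} (h : clarkeDeriv j x v < ρ) :
    ∀ᶠ l in 𝓝[>] (0 : ℝ), (j (x + l • v) - j x) / l < ρ :=
  have hline : Tendsto (fun l : ℝ => (x, l)) (𝓝[>] 0) (clarkeFilter x) :=
    tendsto_const_nhds.prodMk tendsto_id
  hline.eventually (eventually_lt_of_limsup_lt h (isBoundedUnder_le_clarkeQuotient hj hs v))

theorem LocallyLipschitz.le_of_clarkeDeriv_le (hj : LocallyLipschitz j) (a d : Y)
    {B B' : ℝ → ℝ}
    (h₀ : j a ≤ B 0) (hB : ContinuousOn B (Icc 0 1))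
    (hB' : ∀ t ∈ Ico (0 : ℝ) 1, HasDerivWithinAt B (B' t) (Ici t) t)
    (hle : ∀ t ∈ Ico (0 : ℝ) 1, clarkeDeriv j (a + t • d) d ≤ B' t) :
    j (a + d) ≤ B 1 := by
  set g : ℝ → ℝ := fun t => j (a + t • d)
  have hg : ContinuousOn g (Icc 0 1) := (hj.continuous.comp (by fun_prop)).continuousOn
  have bound : ∀ t ∈ Ico (0 : ℝ) 1, ∀ ρ, B' t < ρ → ∃ᶠ z in 𝓝[>] t, slope g t z < ρ := by
    intro t ht ρ hρ
    obtain ⟨K, s, hs, hjs⟩ := hj (a + t • d)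
    have hev := eventually_slope_lt_of_clarkeDeriv_lt hjs hs ((hle t ht).trans_lt hρ)
    have hshift : Tendsto (-t + ·) (𝓝[>] t) (𝓝[>] 0) := by
      have h := (map_add_left_nhdsGT (c := -t) (a := t)).le
      rwa [neg_add_cancel] at h
    refine (hshift.eventually hev).frequently.mono fun z hz => ?_
    rw [neg_add_eq_sub] at hz
    rwa [slope_def_field, show g z = j (a + t • d + (z - t) • d) by
      simp only [g, sub_smul]; abel_nf]
  simpa [g] using image_le_of_liminf_slope_right_le_deriv_boundary hg (by simpa [g] using h₀)
    hB hB' bound (right_mem_Icc.2 zero_le_one)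

lemma clarkeDeriv_smul_neg_le (hj : LocallyLipschitz j) (hK : LipschitzOnWith K j s)
    (hs : s ∈ 𝓝 0) {m : ℝ}
    (hmono : ∀ u : Y, clarkeDeriv j 0 u + clarkeDeriv j u (-u) ≤ m * ‖u‖ ^ 2)
    {c : ℝ} (hc : 0 < c) (u : Y) :
    clarkeDeriv j (c • u) (-u) ≤ m * c * ‖u‖ ^ 2 + K * ‖u‖ := by
  obtain ⟨K', s', hs', hK'⟩ := hj (c • u)
  have hhom : clarkeDeriv j (c • u) (-(c • u)) = c * clarkeDeriv j (c • u) (-u) := by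
    rw [← smul_neg, clarkeDeriv_smul hK' hs' _ hc]
  have hlow := neg_mul_norm_le_clarkeDeriv hK hs (c • u)
  have h := hmono (c • u)
  rw [hhom, norm_smul, Real.norm_of_nonneg hc.le] at h
  rw [norm_smul, Real.norm_of_nonneg hc.le] at hlow
  refine le_of_mul_le_mul_left ?_ hc
  linarith

theorem LocallyLipschitz.exists_quadratic_minorant (hj : LocallyLipschitz j) {m : ℝ}
    (hmono : ∀ u : Y, clarkeDeriv j 0 u + clarkeDeriv j u (-u) ≤ m * ‖u‖ ^ 2) :
    ∃ K : ℝ, 0 ≤ K ∧ ∀ u : Y, j 0 - K * ‖u‖ - m / 2 * ‖u‖ ^ 2 ≤ j u := by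
  obtain ⟨K, s, hs, hK⟩ := hj 0
  refine ⟨K, K.coe_nonneg, fun u => ?_⟩
  have key := hj.le_of_clarkeDeriv_le u (-u)
    (B := fun t => j u + K * ‖u‖ * t + m * ‖u‖ ^ 2 * (t - t ^ 2 / 2))
    (B' := fun t => m * (1 - t) * ‖u‖ ^ 2 + K * ‖u‖) (by simp) (by fun_prop)
    (fun t _ => ?deriv) (fun t ht => ?bound)
  case deriv =>
    refine HasDerivAt.hasDerivWithinAt ?_
    refine ((((hasDerivAt_id t).const_mul (K * ‖u‖ : ℝ)).const_add (j u)).add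
      (((hasDerivAt_id t).sub ((hasDerivAt_pow 2 t).div_const 2)).const_mul
        (m * ‖u‖ ^ 2))).congr_deriv ?_
    simp only [Nat.cast_ofNat]
    ring
  case bound =>
    rw [show u + t • -u = (1 - t) • u by rw [sub_smul, one_smul, smul_neg, sub_eq_add_neg]]
    linarith [clarkeDeriv_smul_neg_le hj hK hs hmono (sub_pos.2 ht.2) u]
  simp only [add_neg_cancel] at key
  linarith

end Clarke

section Potential

variable {𝕜 E F : Type*} [NontriviallyNormedField 𝕜] [AddCommGroup E] [Module 𝕜 E]
  [NormedAddCommGroup F] [NormedSpace 𝕜 F]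

lemma HasLineDerivAt.hasDerivAt_add_smul {f : E → F} {f' : F} {u d : E} {t : 𝕜}
    (h : HasLineDerivAt 𝕜 f f' (u + t • d) d) : HasDerivAt (fun s => f (u + s • d)) f' t := by
  have h' : HasDerivAt (fun s => f (u + t • d + s • d)) f' (t - t) := by rwa [sub_self]
  convert h'.comp_sub_const t t using 2 with s
  rw [add_assoc, ← add_smul, add_sub_cancel]

end Potential

theorem add_apply_sub_add_sq_le_of_hasLineDerivAt {E : Type*} [NormedAddCommGroup E]
    [NormedSpace ℝ E] {F : E → ℝ} {A : E → E →L[ℝ] ℝ} {m : ℝ}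
    (hF : ∀ u v, HasLineDerivAt ℝ F (A u v) u v)
    (hA : ∀ u v, m * ‖u - v‖ ^ 2 ≤ (A u - A v) (u - v)) (u v : E) :
    F u + A u (v - u) + m / 2 * ‖v - u‖ ^ 2 ≤ F v := by
  set d := v - u
  set ψ : ℝ → ℝ := fun t => F (u + t • d) - t * A u d - m / 2 * ‖d‖ ^ 2 * t ^ 2
  have hψ : ∀ t, HasDerivAt ψ (A (u + t • d) d - A u d - m * ‖d‖ ^ 2 * t) t := fun t => by
    refine (((hF _ d).hasDerivAt_add_smul.sub ((hasDerivAt_id t).mul_const (A u d))).sub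
      ((hasDerivAt_pow 2 t).const_mul (m / 2 * ‖d‖ ^ 2))).congr_deriv ?_
    simp only [Nat.cast_ofNat]
    ring
  have hψ_nonneg : ∀ t : ℝ, 0 < t → 0 ≤ A (u + t • d) d - A u d - m * ‖d‖ ^ 2 * t := by
    intro t ht
    have h := hA (u + t • d) u
    rw [add_sub_cancel_left, norm_smul, Real.norm_of_nonneg ht.le, map_smul, smul_eq_mul,
      sub_apply] at h
    nlinarith
  have hmono : MonotoneOn ψ (Icc 0 1) :=
    monotoneOn_of_hasDerivWithinAt_nonneg (convex_Icc 0 1)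
      (HasDerivAt.continuousOn fun t _ => hψ t) (fun t _ => (hψ t).hasDerivWithinAt)
      (fun t ht => hψ_nonneg t (by rw [interior_Icc] at ht; exact ht.1))
  have h01 := hmono (left_mem_Icc.2 zero_le_one) (right_mem_Icc.2 zero_le_one) zero_le_one
  simp only [ψ, zero_smul, add_zero, one_smul, d, add_sub_cancel] at h01
  linarith

lemma tendsto_comap_atTop_of_quadratic_le {α : Type*} {ρ φ : α → ℝ} {a b c : ℝ} (hc : 0 < c)
    (h : ∀ x, a - b * ρ x + c * ρ x ^ 2 ≤ φ x) : Tendsto φ (comap ρ atTop) atTop := by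
  have hlin : Tendsto (fun r : ℝ => c * r - b) atTop atTop :=
    tendsto_atTop_add_const_right _ (-b) (tendsto_id.const_mul_atTop hc)
  have hquad : Tendsto (fun r : ℝ => a - b * r + c * r ^ 2) atTop atTop :=
    (tendsto_atTop_add_const_left _ a (tendsto_id.atTop_mul_atTop₀ hlin)).congr fun r => by
      simp only [id]
      ring
  exact tendsto_atTop_mono h (hquad.comp tendsto_comap)

theorem stmt2_general
    {V : Type*} [NormedAddCommGroup V] [NormedSpace ℝ V]
    {X : Type*} [NormedAddCommGroup X] [NormedSpace ℝ X]
    (A : V → V →L[ℝ] ℝ) (F_A : V → ℝ)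
    (hA_pot : ∀ u v : V, HasLineDerivAt ℝ F_A (A u v) u v)
    (m_A : ℝ)
    (hA_mono : ∀ u v : V, m_A * ‖u - v‖ ^ 2 ≤ (A u - A v) (u - v))
    (J : X → X → ℝ)
    (hJ_lip : ∀ w : X, LocallyLipschitz (J w))
    (m_α m_L : ℝ) (hm_α : 0 ≤ m_α) (hm_L : 0 ≤ m_L)
    (hJ_mono : ∀ w₁ w₂ v₁ v₂ : X,
      clarkeDeriv (J w₁) v₁ (v₂ - v₁) + clarkeDeriv (J w₂) v₂ (v₁ - v₂)
        ≤ m_α * ‖v₁ - v₂‖ ^ 2 + m_L * ‖w₁ - w₂‖ * ‖v₁ - v₂‖)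
    (γ : V →L[ℝ] X) (f : V →L[ℝ] ℝ)
    (hs : (m_α + m_L) * ‖γ‖ ^ 2 < m_A)
    (w : V) :
    Filter.Tendsto (fun v : V => F_A v - f v + J (γ w) (γ v))
      (Filter.comap (fun v : V => ‖v‖) Filter.atTop) Filter.atTop := by
  obtain ⟨K, hK, hJ⟩ := (hJ_lip (γ w)).exists_quadratic_minorant (m := m_α) fun u => by
    simpa using hJ_mono (γ w) (γ w) 0 u
  have hc : 0 < (m_A - m_α * ‖γ‖ ^ 2) / 2 := by nlinarith [mul_nonneg hm_L (sq_nonneg ‖γ‖)]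
  refine tendsto_comap_atTop_of_quadratic_le (a := F_A 0 + J (γ w) 0)
    (b := ‖A 0‖ + ‖f‖ + K * ‖γ‖) hc fun v => ?_
  have hF := add_apply_sub_add_sq_le_of_hasLineDerivAt hA_pot hA_mono 0 v
  rw [sub_zero] at hF
  have hγv : ‖γ v‖ ≤ ‖γ‖ * ‖v‖ := γ.le_opNorm v
  have hA0 : -(‖A 0‖ * ‖v‖) ≤ A 0 v := (neg_abs_le _).trans' (neg_le_neg ((A 0).le_opNorm v))
  have hfv : f v ≤ ‖f‖ * ‖v‖ := (le_abs_self _).trans (f.le_opNorm v)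
  have hKγ : K * ‖γ v‖ ≤ K * (‖γ‖ * ‖v‖) := mul_le_mul_of_nonneg_left hγv hK
  have hαγ : m_α * ‖γ v‖ ^ 2 ≤ m_α * (‖γ‖ * ‖v‖) ^ 2 :=
    mul_le_mul_of_nonneg_left (pow_le_pow_left₀ (norm_nonneg _) hγv 2) hm_α
  linarith [hJ (γ v)]

theorem stmt2
    {V : Type*} [NormedAddCommGroup V] [NormedSpace ℝ V] [CompleteSpace V]
    {X : Type*} [NormedAddCommGroup X] [NormedSpace ℝ X] [CompleteSpace X]
    (hV_refl : Function.Surjective (NormedSpace.inclusionInDoubleDual ℝ V))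
    (A : V → V →L[ℝ] ℝ) (F_A : V → ℝ) (L_A : ℝ) (hL_A : 0 < L_A)
    (hA_lip : ∀ u v : V, ‖A u - A v‖ ≤ L_A * ‖u - v‖)
    (hA_pot : ∀ u v : V, HasLineDerivAt ℝ F_A (A u v) u v)
    (m_A : ℝ) (hm_A : 0 < m_A)
    (hA_mono : ∀ u v : V, m_A * ‖u - v‖ ^ 2 ≤ (A u - A v) (u - v))
    (J : X → X → ℝ)
    (hJ_lip : ∀ w : X, LocallyLipschitz (J w))
    (c₀ c₁ c₂ : ℝ) (hc₀ : 0 ≤ c₀) (hc₁ : 0 ≤ c₁) (hc₂ : 0 ≤ c₂)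
    (hJ_bdd : ∀ w v : X, ∀ ξ ∈ clarkeSubdiff (J w) v, ‖ξ‖ ≤ c₀ + c₁ * ‖v‖ + c₂ * ‖w‖)
    (m_α m_L : ℝ) (hm_α : 0 ≤ m_α) (hm_L : 0 ≤ m_L)
    (hJ_mono : ∀ w₁ w₂ v₁ v₂ : X,
      clarkeDeriv (J w₁) v₁ (v₂ - v₁) + clarkeDeriv (J w₂) v₂ (v₁ - v₂)
        ≤ m_α * ‖v₁ - v₂‖ ^ 2 + m_L * ‖w₁ - w₂‖ * ‖v₁ - v₂‖)
    (γ : V →L[ℝ] X) (f : V →L[ℝ] ℝ)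
    (hs : (m_α + m_L) * ‖γ‖ ^ 2 < m_A)
    (w : V) :
    Filter.Tendsto (fun v : V => F_A v - f v + J (γ w) (γ v))
      (Filter.comap (fun v : V => ‖v‖) Filter.atTop) Filter.atTop :=
  stmt2_general A F_A hA_pot m_A hA_mono J hJ_lip m_α m_L hm_α hm_L hJ_mono γ f hs w
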